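/- Let T : C(E) → C(E) be defined piecewise by (Tφ)(x,y) = s_{ij}(x,y)·(φ(L_{ij}⁻¹(x,y)) − g_{ij}(L_{ij}⁻¹(x,y))) + h_{ij}(x,y) on E_{ij}. If f is the fixed point of T and the functions h_{ij} interpolate the data (h_{ij}(x_a, y_b) = z_{ab} at the corners (x_a,y_b) of E_{ij}) and s_{ij} vanishes on ∂E_{ij}, then f(x_i, y_j) = z_{ij} at every grid point (x_i, y_j), i, j ranging over all grid indices. -/

import Mathlib

open Set

/- A grid point `(x_α, y_β)` is a corner of some cell `E_{ij}`, hence lies on `∂E_{ij}`.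
There `s_{ij}` vanishes, so the functional equation reduces to `f = h_{ij}`, and `h_{ij}`
takes the data value `z_{αβ}` at that corner. -/

theorem Fin.exists_castSucc_eq_or_succ_eq {n : ℕ} (hn : n ≠ 0) (α : Fin (n + 1)) :
    ∃ i : Fin n, i.castSucc = α ∨ i.succ = α := by
  by_cases hα : α = Fin.last n
  · obtain ⟨k, rfl⟩ := Nat.exists_eq_succ_of_ne_zero hn
    exact ⟨Fin.last k, Or.inr (by rw [Fin.succ_last, hα])⟩
  · obtain ⟨i, hi⟩ := Fin.exists_castSucc_eq.2 hα
    exact ⟨i, Or.inl hi⟩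

theorem Monotone.apply_mem_Icc_of_eq_or_eq {α β : Type*} [Preorder α] [Preorder β]
    {u : α → β} (hu : Monotone u) {a b c : α} (hab : a ≤ b) (hc : a = c ∨ b = c) :
    u c ∈ Icc (u a) (u b) := by
  rcases hc with rfl | rfl
  exacts [left_mem_Icc.2 (hu hab), right_mem_Icc.2 (hu hab)]

theorem fixed_point_interpolates_general (n m : ℕ) (hn : 0 < n) (hm : 0 < m)
    (x : Fin (n + 1) → ℝ) (y : Fin (m + 1) → ℝ)
    (hx : StrictMono x) (hy : StrictMono y)
    (z : Fin (n + 1) → Fin (m + 1) → ℝ)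
    (Lx' : Fin n → ℝ → ℝ) (Ly' : Fin m → ℝ → ℝ)
    (s g h : Fin n → Fin m → ℝ × ℝ → ℝ)
    -- s_{ij} vanishes on the boundary of E_{ij}
    (hsbdx : ∀ i j, ∀ b ∈ Icc (y j.castSucc) (y j.succ),
      s i j (x i.castSucc, b) = 0 ∧ s i j (x i.succ, b) = 0)
    -- h_{ij} takes the data values at the four corners of E_{ij}
    (hhcorner : ∀ i j,
      h i j (x i.castSucc, y j.castSucc) = z i.castSucc j.castSucc ∧
      h i j (x i.succ, y j.castSucc) = z i.succ j.castSucc ∧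
      h i j (x i.castSucc, y j.succ) = z i.castSucc j.succ ∧
      h i j (x i.succ, y j.succ) = z i.succ j.succ)
    -- f satisfies the piecewise functional equation f = Tf
    (f : ℝ × ℝ → ℝ)
    (hfe : ∀ i j, ∀ p ∈ Icc (x i.castSucc) (x i.succ) ×ˢ Icc (y j.castSucc) (y j.succ),
      f p = s i j p * (f (Lx' i p.1, Ly' j p.2) - g i j (Lx' i p.1, Ly' j p.2)) +
        h i j p) :
    ∀ α β, f (x α, y β) = z α β := by
  intro α β
  obtain ⟨i, hi⟩ := Fin.exists_castSucc_eq_or_succ_eq hn.ne' α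
  obtain ⟨j, hj⟩ := Fin.exists_castSucc_eq_or_succ_eq hm.ne' β
  have hxα := hx.monotone.apply_mem_Icc_of_eq_or_eq Fin.castSucc_lt_succ.le hi
  have hyβ := hy.monotone.apply_mem_Icc_of_eq_or_eq Fin.castSucc_lt_succ.le hj
  have hs : s i j (x α, y β) = 0 := by
    rcases hi with rfl | rfl
    exacts [(hsbdx i j _ hyβ).1, (hsbdx i j _ hyβ).2]
  have hfh : f (x α, y β) = h i j (x α, y β) := by
    simpa only [hs, zero_mul, zero_add] using hfe i j (x α, y β) ⟨hxα, hyβ⟩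
  obtain ⟨h₀₀, h₁₀, h₀₁, h₁₁⟩ := hhcorner i j
  rw [hfh]
  rcases hi with rfl | rfl <;> rcases hj with rfl | rfl <;> assumption

/-- If `f` satisfies the piecewise functional equation of the operator `T`, the
functions `h_{ij}` take the data values at the corners of `E_{ij}`, and each
`s_{ij}` vanishes on `∂E_{ij}`, then `f` interpolates the data at every grid
point: `f(x_i, y_j) = z_{ij}`. -/
theorem fixed_point_interpolates (n m : ℕ) (hn : 0 < n) (hm : 0 < m)
    (x : Fin (n + 1) → ℝ) (y : Fin (m + 1) → ℝ)
    (hx : StrictMono x) (hy : StrictMono y)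
    (z : Fin (n + 1) → Fin (m + 1) → ℝ)
    (Lx' : Fin n → ℝ → ℝ) (Ly' : Fin m → ℝ → ℝ)
    (s g h : Fin n → Fin m → ℝ × ℝ → ℝ)
    -- s_{ij} vanishes on the boundary of E_{ij}
    (hsbdx : ∀ i j, ∀ b ∈ Icc (y j.castSucc) (y j.succ),
      s i j (x i.castSucc, b) = 0 ∧ s i j (x i.succ, b) = 0)
    (hsbdy : ∀ i j, ∀ a ∈ Icc (x i.castSucc) (x i.succ),
      s i j (a, y j.castSucc) = 0 ∧ s i j (a, y j.succ) = 0)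
    -- h_{ij} takes the data values at the four corners of E_{ij}
    (hhcorner : ∀ i j,
      h i j (x i.castSucc, y j.castSucc) = z i.castSucc j.castSucc ∧
      h i j (x i.succ, y j.castSucc) = z i.succ j.castSucc ∧
      h i j (x i.castSucc, y j.succ) = z i.castSucc j.succ ∧
      h i j (x i.succ, y j.succ) = z i.succ j.succ)
    -- f satisfies the piecewise functional equation f = Tf
    (f : ℝ × ℝ → ℝ)
    (hfe : ∀ i j, ∀ p ∈ Icc (x i.castSucc) (x i.succ) ×ˢ Icc (y j.castSucc) (y j.succ),
      f p = s i j p * (f (Lx' i p.1, Ly' j p.2) - g i j (Lx' i p.1, Ly' j p.2)) +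
        h i j p) :
    ∀ α β, f (x α, y β) = z α β :=
  fixed_point_interpolates_general n m hn hm x y hx hy z Lx' Ly' s g h hsbdx hhcorner f hfe
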